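/- Let n ≥ 1 be a natural number. The number of quadruples (u, v, w, s) of n-bit integers such that, setting t := u ⊕ v ⊕ w, both congruences u ⊕ v ⊕ w ≡ u − v + w (mod 2^n) and w ⊕ s ⊕ t ≡ w − s + t (mod 2^n) hold (congruences in the integers), equals 16 · 8^(n−1). Equivalently, for independent uniformly random n-bit integers u, v, w, s, both events hold with probability (1/2)^(n−1). -/

import Mathlib

/-!
Adding three numbers produces the xor word plus twice the carry word `c` (the bitwise majority),
so `x - y + z - (x ⊕ y ⊕ z) = 2 (c - y)` and `x ⊕ y ⊕ z ≡ x - y + z [ZMOD 2^(m+1)]` says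
`c ≡ y [MOD 2^m]`: at each of the low `m` bits, `x` or `z` agrees with `y`. For the quadruple
`(u, v, w, s)` the two congruences thus become a condition on the bits at each position `i < n - 1`
met by 8 of the 16 bit patterns, while the top bits are free, giving `8^(n-1) * 16`.
-/

open Finset

namespace Nat

theorem add_eq_xor_add_two_mul_and (x y : ℕ) : x + y = (x ^^^ y) + 2 * (x &&& y) := by
  induction x using Nat.binaryRec generalizing y with
  | zero => simp
  | bit b x ih =>
    rw [← bit_testBit_zero_shiftRight_one y, xor_bit, land_bit, bit_val, bit_val, bit_val,
      bit_val]
    have := ih (y >>> 1)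
    cases b <;> cases y.testBit 0 <;>
      simp only [Bool.toNat_false, Bool.toNat_true, add_zero, bne_self_eq_false, Bool.bne_true,
        Bool.bne_false, Bool.not_false, Bool.and_self, Bool.and_true, Bool.and_false] <;> omega

def fullAdderCarry (x y z : ℕ) : ℕ := (x &&& y) ^^^ ((x ^^^ y) &&& z)

theorem add_add_eq_xor_add_two_mul_fullAdderCarry (x y z : ℕ) :
    x + y + z = (x ^^^ y ^^^ z) + 2 * fullAdderCarry x y z := by
  have hdisj : (x &&& y) &&& ((x ^^^ y) &&& z) = 0 := eq_of_testBit_eq fun i => by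
    simp only [testBit_and, testBit_xor, zero_testBit]
    cases x.testBit i <;> cases y.testBit i <;> simp
  have h₁ := add_eq_xor_add_two_mul_and x y
  have h₂ := add_eq_xor_add_two_mul_and (x ^^^ y) z
  have h₃ := add_eq_xor_add_two_mul_and (x &&& y) ((x ^^^ y) &&& z)
  rw [hdisj] at h₃
  rw [fullAdderCarry]
  omega

theorem testBit_fullAdderCarry_eq_iff (x y z i : ℕ) :
    (fullAdderCarry x y z).testBit i = y.testBit i ↔
      x.testBit i = y.testBit i ∨ z.testBit i = y.testBit i := by
  simp only [fullAdderCarry, testBit_xor, testBit_and]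
  cases x.testBit i <;> cases y.testBit i <;> cases z.testBit i <;> decide

theorem modEq_two_pow_iff_testBit (a b m : ℕ) :
    a ≡ b [MOD 2 ^ m] ↔ ∀ i < m, a.testBit i = b.testBit i := by
  refine ⟨fun h i hi => ?_, fun h => eq_of_testBit_eq fun i => ?_⟩
  · simpa [hi] using congrArg (testBit · i) h
  · by_cases hi : i < m <;> simp [hi, h]

theorem xor_xor_modEq_sub_add_iff (x y z m : ℕ) :
    ((x ^^^ y ^^^ z : ℕ) : ℤ) ≡ x - y + z [ZMOD (2 ^ (m + 1) : ℕ)] ↔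
      ∀ i < m, x.testBit i = y.testBit i ∨ z.testBit i = y.testBit i := by
  have hsum := add_add_eq_xor_add_two_mul_fullAdderCarry x y z
  have hdiff : (x : ℤ) - y + z - (x ^^^ y ^^^ z : ℕ) = 2 * (fullAdderCarry x y z - y) := by
    omega
  rw [Int.modEq_iff_dvd, hdiff, pow_succ', Nat.cast_mul, Nat.cast_two,
    mul_dvd_mul_iff_left two_ne_zero, ← Int.modEq_iff_dvd, Int.natCast_modEq_iff,
    modEq_two_pow_iff_testBit]
  exact forall₂_congr fun i _ => by rw [eq_comm, testBit_fullAdderCarry_eq_iff]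

end Nat

def bitsAt (i : ℕ) (q : ℕ × ℕ × ℕ × ℕ) : Bool × Bool × Bool × Bool :=
  (q.1.testBit i, q.2.1.testBit i, q.2.2.1.testBit i, q.2.2.2.testBit i)

def bitQuads (k : ℕ) : Finset (ℕ × ℕ × ℕ × ℕ) :=
  range (2 ^ k) ×ˢ range (2 ^ k) ×ˢ range (2 ^ k) ×ˢ range (2 ^ k)

def consBits : (Bool × Bool × Bool × Bool) × (ℕ × ℕ × ℕ × ℕ) ≃ ℕ × ℕ × ℕ × ℕ where
  toFun p := (Nat.bit p.1.1 p.2.1, Nat.bit p.1.2.1 p.2.2.1, Nat.bit p.1.2.2.1 p.2.2.2.1,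
    Nat.bit p.1.2.2.2 p.2.2.2.2)
  invFun q := (bitsAt 0 q, q.1 >>> 1, q.2.1 >>> 1, q.2.2.1 >>> 1, q.2.2.2 >>> 1)
  left_inv := by rintro ⟨⟨a, b, c, d⟩, u, v, w, s⟩; simp [bitsAt]
  right_inv := by rintro ⟨u, v, w, s⟩; simp [bitsAt]

theorem bitsAt_zero_consBits (b : Bool × Bool × Bool × Bool) (q : ℕ × ℕ × ℕ × ℕ) :
    bitsAt 0 (consBits (b, q)) = b := by
  simp [bitsAt, consBits]

theorem bitsAt_succ_consBits (i : ℕ) (b : Bool × Bool × Bool × Bool) (q : ℕ × ℕ × ℕ × ℕ) :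
    bitsAt (i + 1) (consBits (b, q)) = bitsAt i q := by
  simp [bitsAt, consBits, Nat.testBit_bit_succ]

theorem consBits_mem_bitQuads_succ_iff {k : ℕ} (b : Bool × Bool × Bool × Bool)
    (q : ℕ × ℕ × ℕ × ℕ) :
    consBits (b, q) ∈ bitQuads (k + 1) ↔ q ∈ bitQuads k := by
  simp [bitQuads, consBits]

theorem card_bitQuads (k : ℕ) : #(bitQuads k) = 16 ^ k := by
  simp [bitQuads, ← mul_pow]

section

variable (P : Bool × Bool × Bool × Bool → Prop) [DecidablePred P]

theorem card_filter_bitQuads_succ (k m : ℕ) :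
    #{q ∈ bitQuads (k + 1) | ∀ i < m + 1, P (bitsAt i q)} =
      #{b | P b} * #{q ∈ bitQuads k | ∀ i < m, P (bitsAt i q)} := by
  rw [← card_product]
  refine (card_equiv consBits fun ⟨b, q⟩ => ?_).symm
  simp only [mem_product, mem_filter, mem_univ, true_and, consBits_mem_bitQuads_succ_iff,
    Nat.forall_lt_succ_left, bitsAt_zero_consBits, bitsAt_succ_consBits]
  tauto

theorem card_filter_bitQuads_forall_lt {m k : ℕ} (h : m ≤ k) :
    #{q ∈ bitQuads k | ∀ i < m, P (bitsAt i q)} = #{b | P b} ^ m * 16 ^ (k - m) := by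
  induction m generalizing k with
  | zero => simp [card_bitQuads]
  | succ m ih =>
    obtain ⟨k, rfl⟩ : ∃ k', k = k' + 1 := ⟨k - 1, by omega⟩
    rw [card_filter_bitQuads_succ, ih (by omega), Nat.add_sub_add_right, pow_succ]
    ring

end

open scoped Classical in
/-- For `n ≥ 1`, the number of quadruples `(u, v, w, s)` of `n`-bit integers such that,
with `t := u ^^^ v ^^^ w`, both `u ^^^ v ^^^ w ≡ u - v + w [ZMOD 2^n]` and
`w ^^^ s ^^^ t ≡ w - s + t [ZMOD 2^n]` hold, is `16 * 8^(n-1)`; equivalently, the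
probability over uniform quadruples is `(1/2)^(n-1)`. -/
theorem card_quadruples_add_neg_add (n : ℕ) (hn : 1 ≤ n) :
    let N := ((Finset.range (2 ^ n) ×ˢ Finset.range (2 ^ n) ×ˢ
        Finset.range (2 ^ n) ×ˢ Finset.range (2 ^ n)).filter
      (fun a : ℕ × ℕ × ℕ × ℕ =>
        let u := a.1; let v := a.2.1; let w := a.2.2.1; let s := a.2.2.2
        let t := u ^^^ v ^^^ w
        (((u ^^^ v ^^^ w : ℕ) : ℤ) ≡ (u : ℤ) - (v : ℤ) + (w : ℤ) [ZMOD (2 ^ n : ℕ)]) ∧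
        (((w ^^^ s ^^^ t : ℕ) : ℤ) ≡ (w : ℤ) - (s : ℤ) + (t : ℤ) [ZMOD (2 ^ n : ℕ)]))).card
    N = 16 * 8 ^ (n - 1) ∧ (N : ℚ) / (16 : ℚ) ^ n = ((1 : ℚ) / 2) ^ (n - 1) := by
  intro N
  obtain ⟨m, rfl⟩ : ∃ m, n = m + 1 := ⟨n - 1, by omega⟩
  let P : Bool × Bool × Bool × Bool → Prop := fun ⟨u, v, w, s⟩ =>
    (u = v ∨ w = v) ∧ (w = s ∨ (u ^^ v ^^ w) = s)
  have hP : #{b | P b} = 8 := by decide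
  have hN : N = 16 * 8 ^ m := by
    calc N = #{q ∈ bitQuads (m + 1) | ∀ i < m, P (bitsAt i q)} := by
          refine congrArg card (filter_congr fun q _ => ?_)
          simp only [Nat.xor_xor_modEq_sub_add_iff, bitsAt, Nat.testBit_xor, P, forall_and]
      _ = 16 * 8 ^ m := by
          rw [card_filter_bitQuads_forall_lt P (by omega), hP, Nat.add_sub_cancel_left, pow_one,
            mul_comm]
  refine ⟨hN, ?_⟩
  rw [hN, Nat.add_sub_cancel, div_eq_iff (by positivity), pow_succ, ← mul_assoc, ← mul_pow]
  norm_num [mul_comm]
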